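/- Let m : ℝ → ℝ be C¹ with lim_{z→−∞} m(z) = +1 and lim_{z→+∞} m(z) = −1, and suppose z ↦ (1/2)|m'(z)|² + F(m(z)) is integrable on ℝ. Then ∫_ℝ ((1/2)|m'(z)|² + F(m(z))) dz ≥ ∫_{−1}^{1} √(2F(h)) dh = 2^{3/2}/3. In particular, the planar surface tension S = inf{∫_ℝ ((1/2)|m'|² + F(m)) dz : lim_{z→±∞} m(z) = ∓1} equals 2^{3/2}/3. -/

import Mathlib

open Filter MeasureTheory

noncomputable section

/-- The double-well potential `F(m) = (1/4)(m²-1)²`. -/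
def Fpot (m : ℝ) : ℝ := (1/4) * (m^2 - 1)^2

/-- The one-dimensional free energy of a profile. -/
def oneDimEnergy (m : ℝ → ℝ) : ℝ := ∫ z : ℝ, ((1/2) * (deriv m z)^2 + Fpot (m z))

/-- The planar surface tension: the infimum of the one-dimensional free energy over
profiles connecting `+1` at `-∞` to `-1` at `+∞`. -/
def Stension : ℝ :=
  sInf {e : ℝ | ∃ m : ℝ → ℝ, ContDiff ℝ 1 m ∧
    Tendsto m atBot (nhds 1) ∧ Tendsto m atTop (nhds (-1)) ∧
    Integrable (fun z => (1/2) * (deriv m z)^2 + Fpot (m z)) ∧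
    e = oneDimEnergy m}

/-!
Bogomol'nyi's trick (the Modica–Mortola calibration). Write `F = w² / 2` and let `W' = w`.
Pointwise `w(m) m' ≤ m'² / 2 + F(m)`, and `w(m) m'` is the derivative of `W ∘ m`, so the energy of
any profile running from `a` to `b` is at least `W b - W a`, with equality exactly along the
first-order equation `m' = w(m)`. For the double well, `w(t) = (t² - 1)/√2` and
`W(-1) - W(1) = ∫_{-1}^{1} |w| = ∫_{-1}^{1} √(2F)`, and the equation `m' = w(m)` is solved by
the kink `m(z) = -tanh(z/√2)`.
-/

theorem integrable_of_hasDerivAt_of_nonneg_of_tendsto {g g' : ℝ → ℝ} {a b : ℝ}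
    (hderiv : ∀ x, HasDerivAt g (g' x) x) (hcont : Continuous g') (hnonneg : ∀ x, 0 ≤ g' x)
    (hbot : Tendsto g atBot (nhds a)) (htop : Tendsto g atTop (nhds b)) : Integrable g' := by
  refine integrable_of_intervalIntegral_norm_tendsto (b - a)
    (fun _ => hcont.integrableOn_Ioc) tendsto_neg_atTop_atBot tendsto_id ?_
  have hftc : ∀ i : ℝ, ∫ x in -i..id i, ‖g' x‖ = g i - g (-i) := fun i => by
    simp_rw [Real.norm_of_nonneg (hnonneg _)]
    exact intervalIntegral.integral_eq_sub_of_hasDerivAt (fun x _ => hderiv x)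
      (hcont.intervalIntegrable _ _)
  simp_rw [hftc]
  exact htop.sub (hbot.comp tendsto_neg_atTop_atBot)

theorem contDiff_one_of_hasDerivAt_comp {w m : ℝ → ℝ} (hw : Continuous w)
    (hm : ∀ z, HasDerivAt m (w (m z)) z) : ContDiff ℝ 1 m := by
  have hdiff : Differentiable ℝ m := fun z => (hm z).differentiableAt
  refine contDiff_one_iff_deriv.2 ⟨hdiff, ?_⟩
  rw [funext fun z => (hm z).deriv]
  exact hw.comp hdiff.continuous

section Bogomolny

variable {F w W m : ℝ → ℝ} {a b : ℝ}

theorem sub_le_integral_energy (hF : ∀ t, F t = w t ^ 2 / 2) (hW : ∀ t, HasDerivAt W (w t) t)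
    (hw : Continuous w) (hm : ContDiff ℝ 1 m)
    (hbot : Tendsto m atBot (nhds a)) (htop : Tendsto m atTop (nhds b))
    (hint : Integrable fun z => (1/2) * (deriv m z)^2 + F (m z)) :
    W b - W a ≤ ∫ z, ((1/2) * (deriv m z)^2 + F (m z)) := by
  have hcalib : ∀ z, HasDerivAt (W ∘ m) (w (m z) * deriv m z) z := fun z =>
    (hW (m z)).comp z ((hm.differentiable one_ne_zero z).hasDerivAt)
  have hpoint : ∀ z, |w (m z) * deriv m z| ≤ (1/2) * (deriv m z)^2 + F (m z) := fun z => by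
    rw [hF, abs_le]
    constructor <;> nlinarith [sq_nonneg (deriv m z + w (m z)), sq_nonneg (deriv m z - w (m z))]
  have hint' : Integrable fun z => w (m z) * deriv m z :=
    hint.mono' ((hw.comp hm.continuous).mul (hm.continuous_deriv le_rfl)).aestronglyMeasurable
      (Eventually.of_forall hpoint)
  have hWc : Continuous W := continuous_iff_continuousAt.2 fun t => (hW t).continuousAt
  calc W b - W a = ∫ z, w (m z) * deriv m z :=
        (integral_of_hasDerivAt_of_tendsto hcalib hint' ((hWc.tendsto a).comp hbot)
          ((hWc.tendsto b).comp htop)).symm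
    _ ≤ ∫ z, ((1/2) * (deriv m z)^2 + F (m z)) :=
        integral_mono hint' hint fun z => (le_abs_self _).trans (hpoint z)

theorem integrable_energy_and_integral_eq_of_hasDerivAt (hF : ∀ t, F t = w t ^ 2 / 2)
    (hW : ∀ t, HasDerivAt W (w t) t) (hw : Continuous w) (hm : ∀ z, HasDerivAt m (w (m z)) z)
    (hbot : Tendsto m atBot (nhds a)) (htop : Tendsto m atTop (nhds b)) :
    (Integrable fun z => (1/2) * (deriv m z)^2 + F (m z)) ∧
      ∫ z, ((1/2) * (deriv m z)^2 + F (m z)) = W b - W a := by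
  have henergy : ∀ z, (1/2) * (deriv m z)^2 + F (m z) = w (m z) * w (m z) := fun z => by
    rw [(hm z).deriv, hF]; ring
  have hcalib : ∀ z, HasDerivAt (W ∘ m) (w (m z) * w (m z)) z := fun z => (hW (m z)).comp z (hm z)
  have hWc : Continuous W := continuous_iff_continuousAt.2 fun t => (hW t).continuousAt
  have hmc : Continuous m := continuous_iff_continuousAt.2 fun z => (hm z).continuousAt
  have hlim_bot := (hWc.tendsto a).comp hbot
  have hlim_top := (hWc.tendsto b).comp htop
  have hint : Integrable fun z => w (m z) * w (m z) :=
    integrable_of_hasDerivAt_of_nonneg_of_tendsto hcalib ((hw.comp hmc).mul (hw.comp hmc))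
      (fun z => mul_self_nonneg _) hlim_bot hlim_top
  simp_rw [henergy]
  exact ⟨hint, integral_of_hasDerivAt_of_tendsto hcalib hint hlim_bot hlim_top⟩

end Bogomolny

def Froot (t : ℝ) : ℝ := (t ^ 2 - 1) / √2

def Fprim (t : ℝ) : ℝ := (t ^ 3 / 3 - t) / √2

theorem continuous_Froot : Continuous Froot := by
  unfold Froot; fun_prop

theorem hasDerivAt_Fprim (t : ℝ) : HasDerivAt Fprim (Froot t) t := by
  refine ((((hasDerivAt_pow 3 t).div_const 3).sub (hasDerivAt_id t)).div_const √2).congr_deriv ?_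
  rw [Froot]; ring

theorem Fpot_eq_Froot_sq_div_two (t : ℝ) : Fpot t = Froot t ^ 2 / 2 := by
  rw [Fpot, Froot, div_pow, Real.sq_sqrt zero_le_two]; ring

theorem sqrt_two_mul_Fpot_of_mem_Icc {h : ℝ} (hh : h ∈ Set.Icc (-1) 1) :
    √(2 * Fpot h) = -Froot h := by
  have hFroot : Froot h ≤ 0 := div_nonpos_of_nonpos_of_nonneg (by nlinarith [hh.1, hh.2])
    (Real.sqrt_nonneg 2)
  rw [Fpot_eq_Froot_sq_div_two, mul_div_cancel₀ _ two_ne_zero, Real.sqrt_sq_eq_abs,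
    abs_of_nonpos hFroot]

theorem integral_sqrt_two_mul_Fpot :
    ∫ h in (-1:ℝ)..1, √(2 * Fpot h) = Fprim (-1) - Fprim 1 := by
  rw [intervalIntegral.integral_congr fun h hh =>
      sqrt_two_mul_Fpot_of_mem_Icc (Set.uIcc_of_le (by norm_num : (-1:ℝ) ≤ 1) ▸ hh),
    intervalIntegral.integral_neg, intervalIntegral.integral_eq_sub_of_hasDerivAt
      (fun t _ => hasDerivAt_Fprim t) (continuous_Froot.intervalIntegrable _ _)]
  ring

theorem Fprim_neg_one_sub_Fprim_one : Fprim (-1) - Fprim 1 = (2:ℝ) ^ ((3:ℝ)/2) / 3 := by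
  have h2 : (2:ℝ) ^ ((3:ℝ)/2) = 2 * √2 := by
    rw [show (3:ℝ)/2 = 1 + 1/2 by norm_num, Real.rpow_add two_pos, Real.rpow_one,
      Real.sqrt_eq_rpow]
  rw [h2, Fprim, Fprim]
  field_simp
  rw [Real.sq_sqrt zero_le_two]
  ring

def kink (z : ℝ) : ℝ := 2 / (1 + Real.exp (√2 * z)) - 1

theorem hasDerivAt_kink (z : ℝ) : HasDerivAt kink (Froot (kink z)) z := by
  have hexp : HasDerivAt (fun z => 1 + Real.exp (√2 * z)) (Real.exp (√2 * z) * √2) z := by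
    simpa using (((hasDerivAt_id z).const_mul √2).exp).const_add 1
  have hden : 1 + Real.exp (√2 * z) ≠ 0 := by positivity
  refine (((hasDerivAt_const z (2:ℝ)).div hexp hden).sub_const 1).congr_deriv ?_
  rw [kink, Froot]
  field_simp
  linear_combination (-2 * Real.exp (√2 * z)) * Real.sq_sqrt zero_le_two

theorem tendsto_kink_atBot : Tendsto kink atBot (nhds 1) := by
  have hexp : Tendsto (fun z => Real.exp (√2 * z)) atBot (nhds 0) :=
    Real.tendsto_exp_atBot.comp (tendsto_id.const_mul_atBot (by positivity))
  have h := ((tendsto_const_nhds (x := (2:ℝ))).div (hexp.const_add 1) (by norm_num)).sub_const 1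
  norm_num at h
  exact h

theorem tendsto_kink_atTop : Tendsto kink atTop (nhds (-1)) := by
  have hexp : Tendsto (fun z => 1 + Real.exp (√2 * z)) atTop atTop :=
    tendsto_atTop_add_const_left _ 1
      (Real.tendsto_exp_atTop.comp (tendsto_id.const_mul_atTop (by positivity)))
  have h := ((tendsto_const_nhds (x := (2:ℝ))).div_atTop hexp).sub_const 1
  norm_num at h
  exact h

/-- Lower bound for the planar free energy of any transition profile, and the value
`S = ∫_{-1}^1 √(2F(h)) dh = 2^{3/2}/3` of the planar surface tension. -/
theorem surface_tension_value :
    (∀ m : ℝ → ℝ, ContDiff ℝ 1 m →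
      Tendsto m atBot (nhds 1) → Tendsto m atTop (nhds (-1)) →
      Integrable (fun z => (1/2) * (deriv m z)^2 + Fpot (m z)) →
      (∫ h in (-1:ℝ)..1, Real.sqrt (2 * Fpot h)) ≤ oneDimEnergy m) ∧
    (∫ h in (-1:ℝ)..1, Real.sqrt (2 * Fpot h)) = (2:ℝ) ^ ((3:ℝ)/2) / 3 ∧
    Stension = (2:ℝ) ^ ((3:ℝ)/2) / 3 := by
  have hlower : ∀ m : ℝ → ℝ, ContDiff ℝ 1 m → Tendsto m atBot (nhds 1) →
      Tendsto m atTop (nhds (-1)) → Integrable (fun z => (1/2) * (deriv m z)^2 + Fpot (m z)) →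
      Fprim (-1) - Fprim 1 ≤ oneDimEnergy m := fun _ hm hbot htop hint =>
    sub_le_integral_energy Fpot_eq_Froot_sq_div_two hasDerivAt_Fprim continuous_Froot hm hbot htop
      hint
  obtain ⟨hkink_int, hkink_energy⟩ := integrable_energy_and_integral_eq_of_hasDerivAt
    Fpot_eq_Froot_sq_div_two hasDerivAt_Fprim continuous_Froot hasDerivAt_kink tendsto_kink_atBot
    tendsto_kink_atTop
  rw [integral_sqrt_two_mul_Fpot, ← Fprim_neg_one_sub_Fprim_one]
  refine ⟨hlower, rfl, IsLeast.csInf_eq ⟨?_, ?_⟩⟩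
  · exact ⟨kink, contDiff_one_of_hasDerivAt_comp continuous_Froot hasDerivAt_kink,
      tendsto_kink_atBot, tendsto_kink_atTop, hkink_int, hkink_energy.symm⟩
  · rintro e ⟨m, hm, hbot, htop, hint, rfl⟩
    exact hlower m hm hbot htop hint

end
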